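/- For n ≥ 2, the group of basis-conjugating automorphisms Cb_n is an iterated semidirect product Cb_n = D_{n-1} ⋉ (D_{n-2} ⋉ ( … ⋉ (D_2 ⋉ D_1)) … ): for each i, D_{n-1} ⋉ ( … ⋉ D_{i+1} … ) is normal in Cb_n, the product of the D_i equals Cb_n, and each D_i intersects the product of the lower-indexed factors trivially. In each D_i, the elements ε_{i+1,1},…,ε_{i+1,i} generate a free group of rank i and the elements ε_{1,i+1},…,ε_{i,i+1} generate a free abelian group of rank i. Moreover this decomposition is consistent with the decomposition of the pure braid group P_n: U_{i+1} ≤ D_i for i = 1,2,…,n−1, where U_{i+1} = ⟨a_{1,i+1}, a_{2,i+1}, …, a_{i,i+1}⟩. -/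

import Mathlib

/-- The basis-conjugating automorphism ε_{ij} of the free group:
`x_i ↦ x_j⁻¹ x_i x_j`, `x_l ↦ x_l` for `l ≠ i`. -/
def eps {n : ℕ} (i j : Fin n) : MulAut (FreeGroup (Fin n)) :=
  MonoidHom.toMulEquiv
    (FreeGroup.lift fun l =>
      if l = i then (FreeGroup.of j)⁻¹ * FreeGroup.of i * FreeGroup.of j else FreeGroup.of l)
    (FreeGroup.lift fun l =>
      if l = i then FreeGroup.of j * FreeGroup.of i * (FreeGroup.of j)⁻¹ else FreeGroup.of l)
    (by ext l; by_cases h : l = i <;> by_cases h2 : j = i <;> simp [h, h2, mul_assoc])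
    (by ext l; by_cases h : l = i <;> by_cases h2 : j = i <;> simp [h, h2, mul_assoc])

/-- The group `Cb n` of basis-conjugating automorphisms. -/
def Cb (n : ℕ) : Subgroup (MulAut (FreeGroup (Fin n))) :=
  Subgroup.closure {e | ∃ i j : Fin n, i ≠ j ∧ e = eps i j}

/-- The subgroup `D_j` (0-based: the paper's `D_i` is `Dsub i`), generated by
`ε_{j,t}` and `ε_{t,j}` for all `t < j`. -/
def Dsub {n : ℕ} (j : Fin n) : Subgroup (MulAut (FreeGroup (Fin n))) :=
  Subgroup.closure {e | ∃ t : Fin n, t < j ∧ (e = eps j t ∨ e = eps t j)}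

/-- The braid automorphism: `x_i ↦ x_i x_j x_i⁻¹`, `x_j ↦ x_i`, `x_l ↦ x_l`. -/
def braidGen {n : ℕ} (i j : Fin n) : MulAut (FreeGroup (Fin n)) :=
  MonoidHom.toMulEquiv
    (FreeGroup.lift fun l =>
      if l = i then FreeGroup.of i * FreeGroup.of j * (FreeGroup.of i)⁻¹
      else if l = j then FreeGroup.of i else FreeGroup.of l)
    (FreeGroup.lift fun l =>
      if l = i then FreeGroup.of j
      else if l = j then (FreeGroup.of j)⁻¹ * FreeGroup.of i * FreeGroup.of j
      else FreeGroup.of l)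
    (by ext l; by_cases h : l = i <;> by_cases h2 : l = j <;> by_cases h3 : j = i <;>
      simp_all [mul_assoc])
    (by ext l; by_cases h : l = i <;> by_cases h2 : l = j <;> by_cases h3 : j = i <;>
      simp_all [mul_assoc])

/-- The braid generator σ_k (0-based) acting on the free group of rank `n`
(the identity if `k` is out of range). -/
def sigmaNat (n k : ℕ) : MulAut (FreeGroup (Fin n)) :=
  if h : k + 1 < n then braidGen ⟨k, by omega⟩ ⟨k + 1, h⟩ else 1

/- NOTE on conventions: the paper composes automorphisms left-to-right (right action),
while in Mathlib `(f * g) x = f (g x)`.  Hence a word `w₁ w₂ ⋯ w_k` of automorphisms in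
the paper corresponds to the Mathlib product `w_k * ⋯ * w₂ * w₁`; words below are
transcribed accordingly. -/

/-- The paper's conjugating word `σ_{j-1} σ_{j-2} ⋯ σ_{i+1}` (0-based indices),
transcribed into Mathlib composition order as `σ_{i+1} * ⋯ * σ_{j-1}`. -/
def aConj (n i j : ℕ) : MulAut (FreeGroup (Fin n)) :=
  (((List.range (j - 1 - i)).map fun t => sigmaNat n (j - 1 - t)).reverse).prod

/-- The pure braid generator `a_{ij} = σ_{j-1} ⋯ σ_{i+1} σ_i² σ_{i+1}⁻¹ ⋯ σ_{j-1}⁻¹`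
(0-based indices `i < j`; for `j = i+1` it is `σ_i²`), transcribed into Mathlib's
composition order. -/
def a0 (n i j : ℕ) : MulAut (FreeGroup (Fin n)) :=
  (aConj n i j)⁻¹ * (sigmaNat n i) ^ 2 * aConj n i j

/-!
Normality of each tail `⟨D_j : j ≥ t⟩` is checked on generators: conjugating `ε_{pq}` with
`max p q ≥ t` by `ε_{ab}` with `a, b < t` gives, by the McCool-type relations among the `ε_{ij}`,
a word in generators that again have an index `≥ t`.

For the trivial intersections, let `π_j` kill the letters `x_l` with `l ≥ j`. Every generator of
`D_j` preserves the fibres of `π_j`, while every generator of a lower factor commutes with `π_j`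
and fixes the `x_l` with `l ≥ j`; an automorphism with all three properties is the identity.

Both freeness statements rest on one fact about free groups: a word avoiding the letter `x_s` that
commutes with `x_s` is trivial. Indeed, the image of a word `w` in the `ε_{j,t}` sends `x_j` to
`x_j` conjugated by `w(x_t)`, and `∏ ε_{t,j}^{m_t}` sends `x_s` to `x_j^{-m_s} x_s x_j^{m_s}`.

Finally, conjugation by `σ_j` carries `Dsub j` into `Dsub (j+1)`, so `a_{i,j} ∈ Dsub j` follows by
induction on `j` from `a_{i,i+1} = σ_i² = ε_{i+1,i}⁻¹ ε_{i,i+1}⁻¹ ∈ Dsub (i+1)`.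
-/

namespace Subgroup

variable {G : Type*} [Group G]

lemma mem_normalizer_closure_of_conj {s : Set G} {g : G}
    (h₁ : ∀ x ∈ s, g * x * g⁻¹ ∈ closure s) (h₂ : ∀ x ∈ s, g⁻¹ * x * g ∈ closure s) :
    g ∈ normalizer (closure s) := by
  rw [mem_normalizer_iff_map_conj_eq, MonoidHom.map_closure]
  refine le_antisymm ((closure_le _).mpr ?_) ((closure_le _).mpr fun x hx => ?_)
  · rintro _ ⟨x, hx, rfl⟩
    exact h₁ x hx
  · rw [← MonoidHom.map_closure]
    exact ⟨_, h₂ x hx, by simp [mul_assoc]⟩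

end Subgroup

lemma Commute.conj_mem_and_inv_conj_mem {G : Type*} [Group G] {H : Subgroup G} {g x : G}
    (hc : Commute g x) (hx : x ∈ H) : g * x * g⁻¹ ∈ H ∧ g⁻¹ * x * g ∈ H :=
  ⟨by rwa [hc.mul_inv_cancel], by rwa [hc.inv_left.eq, inv_mul_cancel_right]⟩

namespace MulAut

variable {G : Type*} [Group G]

section

variable (f : G →* G)

def fiberwise : Subgroup (MulAut G) where
  carrier := {α | ∀ x, f (α x) = f x}
  one_mem' _ := rfl
  mul_mem' ha hb x := (ha _).trans (hb x)
  inv_mem' {α} ha x := by simpa using (ha (α⁻¹ x)).symm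

def commuting : Subgroup (MulAut G) where
  carrier := {α | ∀ x, α (f x) = f (α x)}
  one_mem' _ := rfl
  mul_mem' {α β} ha hb x := by rw [mul_apply, mul_apply, hb, ha]
  inv_mem' {α} ha x := by
    apply α.injective
    rw [ha, apply_inv_self, apply_inv_self]

lemma apply_eq_of_mem_fiberwise_inf_commuting {α : MulAut G}
    (h : α ∈ fiberwise f ⊓ commuting f) (x : G) : α (f x) = f x :=
  (h.2 x).trans (h.1 x)

end

lemma list_prod_apply_of_conj {ι : Type*} {x y : G} (f : ι → MulAut G)
    (k : ι → ℤ) (L : List ι) (hfix : ∀ i ∈ L, f i y = y)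
    (hconj : ∀ i ∈ L, f i x = (y ^ k i)⁻¹ * x * y ^ k i) :
    (L.map f).prod x = (y ^ (L.map k).sum)⁻¹ * x * y ^ (L.map k).sum := by
  induction L with
  | nil => simp
  | cons i L ih =>
    simp only [List.forall_mem_cons] at hfix hconj
    rw [List.map_cons, List.prod_cons, mul_apply, ih hfix.2 hconj.2, _root_.map_mul,
      _root_.map_mul, _root_.map_inv, _root_.map_zpow, hfix.1, hconj.1, List.map_cons,
      List.sum_cons, zpow_add]
    group

end MulAut

namespace FreeGroup

variable {α : Type*}

lemma mulAut_ext {f g : MulAut (FreeGroup α)}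
    (h : ∀ a, f (of a) = g (of a)) : f = g :=
  MulEquiv.toMonoidHom_injective (ext_hom _ _ h)

variable [DecidableEq α]

def avoiding (s : α) : Subgroup (FreeGroup α) where
  carrier := {u | ∀ p ∈ u.toWord, p.1 ≠ s}
  one_mem' := by simp [toWord_one]
  mul_mem' {u v} hu hv p hp := by
    rcases List.mem_append.mp ((toWord_mul_sublist u v).subset hp) with h | h
    exacts [hu p h, hv p h]
  inv_mem' {u} hu p hp := by
    rw [toWord_inv, invRev, List.mem_reverse, List.mem_map] at hp
    obtain ⟨q, hq, rfl⟩ := hp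
    exact hu q hq

lemma of_mem_avoiding {a s : α} (h : a ≠ s) : of a ∈ avoiding s := by
  simpa [avoiding, toWord_of] using h

lemma toWord_inv_mul_of_mul {s : α} {u : FreeGroup α} (hu : u ∈ avoiding s) :
    (u⁻¹ * of s * u).toWord = invRev u.toWord ++ (s, true) :: u.toWord := by
  have cons_isReduced : ∀ L : List (α × Bool), (∀ p ∈ L, p.1 ≠ s) → ∀ b : Bool,
      IsReduced L → IsReduced ((s, b) :: L) := by
    intro L hL b hred
    refine List.isChain_cons.mpr ⟨fun y hy h => absurd h.symm (hL y ?_), hred⟩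
    exact List.mem_of_mem_head? hy
  have left : IsReduced (invRev u.toWord ++ [(s, true)]) := by
    have h := cons_isReduced _ hu false isReduced_toWord
    rw [isReduced_iff_reduce_eq] at h ⊢
    have e : invRev ((s, false) :: u.toWord) = invRev u.toWord ++ [(s, true)] := by
      simp [invRev]
    rw [← e, reduce_invRev, h]
  have right := cons_isReduced _ hu true isReduced_toWord
  have hmk : u⁻¹ * of s * u = mk (invRev u.toWord ++ (s, true) :: u.toWord) := by
    conv_lhs => rw [← mk_toWord (x := u)]
    rw [inv_mk, show of s = mk [(s, true)] from rfl, mul_mk, mul_mk]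
    simp
  rw [hmk, toWord_mk, ← List.singleton_append, ← List.append_assoc]
  exact (left.append_overlap right (List.cons_ne_nil _ _)).reduce_eq

lemma eq_one_of_inv_mul_of_mul_eq {s : α} {u : FreeGroup α} (hu : u ∈ avoiding s)
    (h : u⁻¹ * of s * u = of s) : u = 1 := by
  have hlen := congrArg (List.length ∘ toWord) h
  simp only [Function.comp_apply, toWord_inv_mul_of_mul hu, toWord_of, List.length_append,
    invRev_length, List.length_cons, List.length_nil] at hlen
  exact toWord_eq_nil_iff.mp (List.length_eq_zero_iff.mp (by omega))

end FreeGroup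

section Generators

open FreeGroup

variable {n : ℕ}

@[simp] lemma eps_apply_of (i j l : Fin n) :
    eps i j (of l) = if l = i then (of j)⁻¹ * of i * of j else of l := by
  simp [eps]

@[simp] lemma eps_symm_apply_of (i j l : Fin n) :
    (eps i j).symm (of l) = if l = i then of j * of i * (of j)⁻¹ else of l := by
  simp [eps]

@[simp] lemma eps_inv_apply_of (i j l : Fin n) :
    (eps i j)⁻¹ (of l) = if l = i then of j * of i * (of j)⁻¹ else of l :=
  eps_symm_apply_of i j l

@[simp] lemma braidGen_apply_of (i j l : Fin n) :
    braidGen i j (of l) =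
      if l = i then of i * of j * (of i)⁻¹ else if l = j then of i else of l := by
  simp [braidGen]

@[simp] lemma braidGen_symm_apply_of (i j l : Fin n) :
    (braidGen i j).symm (of l) =
      if l = i then of j else if l = j then (of j)⁻¹ * of i * of j else of l := by
  simp [braidGen]

@[simp] lemma braidGen_inv_apply_of (i j l : Fin n) :
    (braidGen i j)⁻¹ (of l) =
      if l = i then of j else if l = j then (of j)⁻¹ * of i * of j else of l :=
  braidGen_symm_apply_of i j l

lemma eps_commute {a b p q : Fin n} (hap : a ≠ p) (haq : a ≠ q) (hbp : b ≠ p) :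
    Commute (eps a b) (eps p q) := by
  refine mulAut_ext fun l => ?_
  by_cases hl1 : l = a <;> by_cases hl2 : l = p <;> simp_all [MulAut.mul_apply, eq_comm]

lemma eps_conj_eps_left {p q b : Fin n} (hpq : p ≠ q) (hpb : p ≠ b) :
    eps p b * eps p q * (eps p b)⁻¹ = (eps q b)⁻¹ * eps p q * eps q b := by
  refine mulAut_ext fun l => ?_
  by_cases hl1 : l = p <;> by_cases hl2 : l = q <;>
    simp_all [MulAut.mul_apply, eq_comm, mul_assoc]

lemma eps_inv_conj_eps_left {p q b : Fin n} (hpq : p ≠ q) (hpb : p ≠ b) :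
    (eps p b)⁻¹ * eps p q * eps p b = eps q b * eps p q * (eps q b)⁻¹ := by
  refine mulAut_ext fun l => ?_
  by_cases hl1 : l = p <;> by_cases hl2 : l = q <;>
    simp_all [MulAut.mul_apply, eq_comm, mul_assoc]

lemma eps_conj_eps_right_eq_left {p a b : Fin n} (hpa : p ≠ a) (hpb : p ≠ b) :
    eps a b * eps p a * (eps a b)⁻¹ = (eps p b)⁻¹ * eps p a * eps p b := by
  refine mulAut_ext fun l => ?_
  by_cases hl1 : l = p <;> by_cases hl2 : l = a <;>
    simp_all [MulAut.mul_apply, eq_comm, mul_assoc]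

lemma eps_inv_conj_eps_right_eq_left {p a b : Fin n} (hpa : p ≠ a) (hpb : p ≠ b) :
    (eps a b)⁻¹ * eps p a * eps a b = eps p b * eps p a * (eps p b)⁻¹ := by
  refine mulAut_ext fun l => ?_
  by_cases hl1 : l = p <;> by_cases hl2 : l = a <;>
    simp_all [MulAut.mul_apply, eq_comm, mul_assoc]

lemma eps_conj_eps_left_eq_right {a b q : Fin n} (hab : a ≠ b) (haq : a ≠ q) (hbq : b ≠ q) :
    eps a b * eps b q * (eps a b)⁻¹ =
      (eps q b)⁻¹ * (eps a q)⁻¹ * eps q b * eps a q * eps b q := by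
  refine mulAut_ext fun l => ?_
  by_cases hl1 : l = a <;> by_cases hl2 : l = b <;> by_cases hl3 : l = q <;>
    simp_all [MulAut.mul_apply, eq_comm, mul_assoc]

lemma eps_inv_conj_eps_left_eq_right {a b q : Fin n} (hab : a ≠ b) (haq : a ≠ q) (hbq : b ≠ q) :
    (eps a b)⁻¹ * eps b q * eps a b =
      eps q b * (eps a q)⁻¹ * (eps q b)⁻¹ * eps a q * eps b q := by
  refine mulAut_ext fun l => ?_
  by_cases hl1 : l = a <;> by_cases hl2 : l = b <;> by_cases hl3 : l = q <;>
    simp_all [MulAut.mul_apply, eq_comm, mul_assoc]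

lemma braidGen_inv_conj_eps_right {u v s : Fin n} (huv : u ≠ v) (hsu : s ≠ u) (hsv : s ≠ v) :
    (braidGen u v)⁻¹ * eps s u * braidGen u v = eps s v := by
  refine mulAut_ext fun l => ?_
  by_cases hl1 : l = s <;> by_cases hl2 : l = u <;> by_cases hl3 : l = v <;>
    simp_all [MulAut.mul_apply, eq_comm, mul_assoc]

lemma braidGen_inv_conj_eps_left {u v s : Fin n} (huv : u ≠ v) (hsu : s ≠ u) (hsv : s ≠ v) :
    (braidGen u v)⁻¹ * eps u s * braidGen u v = eps u v * eps v s * (eps u v)⁻¹ := by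
  refine mulAut_ext fun l => ?_
  by_cases hl1 : l = s <;> by_cases hl2 : l = u <;> by_cases hl3 : l = v <;>
    simp_all [MulAut.mul_apply, eq_comm, mul_assoc]

lemma braidGen_sq {u v : Fin n} (huv : u ≠ v) :
    braidGen u v ^ 2 = (eps v u)⁻¹ * (eps u v)⁻¹ := by
  refine mulAut_ext fun l => ?_
  by_cases hl1 : l = u <;> by_cases hl2 : l = v <;>
    simp_all [pow_two, MulAut.mul_apply, eq_comm, mul_assoc]

end Generators

section Tails

variable {n : ℕ}

def tailGens (t : Fin n) : Set (MulAut (FreeGroup (Fin n))) :=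
  {e | ∃ p q : Fin n, p ≠ q ∧ (t ≤ p ∨ t ≤ q) ∧ e = eps p q}

lemma eps_mem_Dsub_max {p q : Fin n} (hpq : p ≠ q) : eps p q ∈ Dsub (max p q) := by
  rcases hpq.lt_or_gt with h | h
  · rw [max_eq_right h.le]
    exact Subgroup.subset_closure ⟨p, h, Or.inr rfl⟩
  · rw [max_eq_left h.le]
    exact Subgroup.subset_closure ⟨q, h, Or.inl rfl⟩

lemma Dsub_le_closure {j : Fin n} {s : Set (MulAut (FreeGroup (Fin n)))}
    (h : ∀ p q, p ≠ q → max p q = j → eps p q ∈ s) : Dsub j ≤ Subgroup.closure s := by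
  refine (Subgroup.closure_le _).mpr ?_
  rintro _ ⟨t, htj, rfl | rfl⟩
  · exact Subgroup.subset_closure (h j t htj.ne' (max_eq_left htj.le))
  · exact Subgroup.subset_closure (h t j htj.ne (max_eq_right htj.le))

lemma Dsub_le_Cb (j : Fin n) : Dsub j ≤ Cb n :=
  Dsub_le_closure fun p q hpq _ => ⟨p, q, hpq, rfl⟩

lemma iSup_Dsub_eq_Cb : ⨆ j : Fin n, Dsub j = Cb n := by
  refine le_antisymm (iSup_le Dsub_le_Cb) ((Subgroup.closure_le _).mpr ?_)
  rintro _ ⟨p, q, hpq, rfl⟩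
  exact Subgroup.mem_iSup_of_mem _ (eps_mem_Dsub_max hpq)

lemma iSup_Dsub_ge_eq_closure (t : Fin n) :
    ⨆ j : Fin n, ⨆ _ : t ≤ j, Dsub j = Subgroup.closure (tailGens t) := by
  refine le_antisymm (iSup₂_le fun j htj => Dsub_le_closure fun p q hpq hj => ?_)
    ((Subgroup.closure_le _).mpr ?_)
  · exact ⟨p, q, hpq, le_max_iff.mp (hj ▸ htj), rfl⟩
  · rintro _ ⟨p, q, hpq, ht, rfl⟩
    exact Subgroup.mem_iSup_of_mem (max p q)
      (Subgroup.mem_iSup_of_mem (le_max_iff.mpr ht) (eps_mem_Dsub_max hpq))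

lemma eps_mem_closure_tailGens {t p q : Fin n} (hpq : p ≠ q) (ht : t ≤ p ∨ t ≤ q) :
    eps p q ∈ Subgroup.closure (tailGens t) :=
  Subgroup.subset_closure ⟨p, q, hpq, ht, rfl⟩

lemma eps_conj_eps_mem_closure_tailGens_of_le_right {t a b p q : Fin n} (hat : a < t)
    (hbt : b < t) (hab : a ≠ b) (hpq : p ≠ q) (htq : t ≤ q) :
    eps a b * eps p q * (eps a b)⁻¹ ∈ Subgroup.closure (tailGens t) ∧
      (eps a b)⁻¹ * eps p q * eps a b ∈ Subgroup.closure (tailGens t) := by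
  have hqa : q ≠ a := (hat.trans_le htq).ne'
  have hqb : q ≠ b := (hbt.trans_le htq).ne'
  have hpq' := eps_mem_closure_tailGens hpq (Or.inr htq)
  have hqb' := eps_mem_closure_tailGens hqb (Or.inl htq)
  by_cases hpa : p = a
  · subst hpa
    rw [eps_conj_eps_left hpq hab, eps_inv_conj_eps_left hpq hab]
    exact ⟨mul_mem (mul_mem (inv_mem hqb') hpq') hqb', mul_mem (mul_mem hqb' hpq') (inv_mem hqb')⟩
  by_cases hpb : p = b
  · subst hpb
    have haq' := eps_mem_closure_tailGens hqa.symm (Or.inr htq)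
    rw [eps_conj_eps_left_eq_right hab hqa.symm hqb.symm,
      eps_inv_conj_eps_left_eq_right hab hqa.symm hqb.symm]
    exact ⟨mul_mem (mul_mem (mul_mem (mul_mem (inv_mem hqb') (inv_mem haq')) hqb') haq') hpq',
      mul_mem (mul_mem (mul_mem (mul_mem hqb' (inv_mem haq')) (inv_mem hqb')) haq') hpq'⟩
  exact (eps_commute (Ne.symm hpa) hqa.symm (Ne.symm hpb)).conj_mem_and_inv_conj_mem hpq'

lemma eps_conj_eps_mem_closure_tailGens_of_le_left {t a b p q : Fin n} (hat : a < t)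
    (hbt : b < t) (hpq : p ≠ q) (htp : t ≤ p) :
    eps a b * eps p q * (eps a b)⁻¹ ∈ Subgroup.closure (tailGens t) ∧
      (eps a b)⁻¹ * eps p q * eps a b ∈ Subgroup.closure (tailGens t) := by
  have hpa : p ≠ a := (hat.trans_le htp).ne'
  have hpb : p ≠ b := (hbt.trans_le htp).ne'
  have hpq' := eps_mem_closure_tailGens hpq (Or.inl htp)
  by_cases hqa : q = a
  · subst hqa
    have hpb' := eps_mem_closure_tailGens hpb (Or.inl htp)
    rw [eps_conj_eps_right_eq_left hpq hpb, eps_inv_conj_eps_right_eq_left hpq hpb]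
    exact ⟨mul_mem (mul_mem (inv_mem hpb') hpq') hpb', mul_mem (mul_mem hpb' hpq') (inv_mem hpb')⟩
  exact (eps_commute hpa.symm (Ne.symm hqa) hpb.symm).conj_mem_and_inv_conj_mem hpq'

lemma eps_conj_mem_closure_tailGens (t : Fin n) {a b : Fin n} (hab : a ≠ b)
    {e : MulAut (FreeGroup (Fin n))} (he : e ∈ tailGens t) :
    eps a b * e * (eps a b)⁻¹ ∈ Subgroup.closure (tailGens t) ∧
      (eps a b)⁻¹ * e * eps a b ∈ Subgroup.closure (tailGens t) := by
  obtain ⟨p, q, hpq, hpqt, rfl⟩ := he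
  by_cases habt : t ≤ a ∨ t ≤ b
  · have hab' := eps_mem_closure_tailGens hab habt
    have hpq' := eps_mem_closure_tailGens hpq hpqt
    exact ⟨mul_mem (mul_mem hab' hpq') (inv_mem hab'), mul_mem (mul_mem (inv_mem hab') hpq') hab'⟩
  push Not at habt
  rcases le_or_gt t q with htq | hqt
  · exact eps_conj_eps_mem_closure_tailGens_of_le_right habt.1 habt.2 hab hpq htq
  · exact eps_conj_eps_mem_closure_tailGens_of_le_left habt.1 habt.2 hpq
      (hpqt.resolve_right hqt.not_ge)

lemma Cb_le_normalizer_closure_tailGens (t : Fin n) :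
    Cb n ≤ Subgroup.normalizer
      (Subgroup.closure (tailGens t) : Set (MulAut (FreeGroup (Fin n)))) := by
  refine (Subgroup.closure_le _).mpr ?_
  rintro _ ⟨a, b, hab, rfl⟩
  exact Subgroup.mem_normalizer_closure_of_conj
    (fun e he => (eps_conj_mem_closure_tailGens t hab he).1)
    (fun e he => (eps_conj_mem_closure_tailGens t hab he).2)

end Tails

section LowerFactors

open FreeGroup

variable {n : ℕ}

def lowProj (j : Fin n) : FreeGroup (Fin n) →* FreeGroup (Fin n) :=
  FreeGroup.lift fun l => if l < j then of l else 1

lemma eps_mem_fiberwise_lowProj {j a b : Fin n} (h : j ≤ a ∨ j ≤ b) :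
    eps a b ∈ MulAut.fiberwise (lowProj j) := by
  have hcomp : (lowProj j).comp (eps a b).toMonoidHom = lowProj j := ext_hom _ _ fun l => by
    by_cases hl : l = a
    · subst hl
      rcases h with h | h <;> by_cases hb : b < j <;> simp [lowProj, not_lt.mpr h, hb]
    · simp [lowProj, hl]
  exact DFunLike.congr_fun hcomp

lemma eps_mem_commuting_lowProj {j a b : Fin n} (ha : a < j) (hb : b < j) :
    eps a b ∈ MulAut.commuting (lowProj j) := by
  have hcomp : (eps a b).toMonoidHom.comp (lowProj j) = (lowProj j).comp (eps a b).toMonoidHom :=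
    ext_hom _ _ fun l => by
      by_cases hl : l = a
      · subst hl
        simp [lowProj, ha, hb]
      · by_cases hlj : l < j <;> simp [lowProj, hl, hlj]
  exact DFunLike.congr_fun hcomp

def fixingHigh (j : Fin n) : Subgroup (MulAut (FreeGroup (Fin n))) :=
  ⨅ l : Fin n, ⨅ _ : j ≤ l, MulAction.stabilizer _ (of l)

lemma Dsub_le_fiberwise_lowProj (j : Fin n) : Dsub j ≤ MulAut.fiberwise (lowProj j) := by
  refine (Subgroup.closure_le _).mpr ?_
  rintro _ ⟨t, -, rfl | rfl⟩
  exacts [eps_mem_fiberwise_lowProj (Or.inl le_rfl), eps_mem_fiberwise_lowProj (Or.inr le_rfl)]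

lemma iSup_Dsub_lt_le_commuting_inf_fixingHigh (j : Fin n) :
    ⨆ j' : Fin n, ⨆ _ : j' < j, Dsub j' ≤ MulAut.commuting (lowProj j) ⊓ fixingHigh j := by
  refine iSup₂_le fun j' hj' => (Subgroup.closure_le _).mpr ?_
  suffices ∀ a b, a < j → b < j → eps a b ∈ MulAut.commuting (lowProj j) ⊓ fixingHigh j by
    rintro _ ⟨t, htj', rfl | rfl⟩
    exacts [this _ _ hj' (htj'.trans hj'), this _ _ (htj'.trans hj') hj']
  intro a b ha hb
  refine Subgroup.mem_inf.mpr ⟨eps_mem_commuting_lowProj ha hb, ?_⟩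
  refine Subgroup.mem_iInf.mpr fun l => Subgroup.mem_iInf.mpr fun hl => ?_
  rw [MulAction.mem_stabilizer_iff, MulAut.smul_def]
  simp [(ha.trans_le hl).ne']

lemma Dsub_inf_iSup_Dsub_lt_eq_bot (j : Fin n) :
    Dsub j ⊓ ⨆ j' : Fin n, ⨆ _ : j' < j, Dsub j' = ⊥ := by
  refine eq_bot_iff.mpr fun α hα => ?_
  obtain ⟨hD, hlow⟩ := Subgroup.mem_inf.mp hα
  obtain ⟨hcomm, hfix⟩ := Subgroup.mem_inf.mp (iSup_Dsub_lt_le_commuting_inf_fixingHigh j hlow)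
  refine Subgroup.mem_bot.mpr (mulAut_ext fun l => ?_)
  rcases lt_or_ge l j with hl | hl
  · have hproj : lowProj j (of l) = of l := by simp [lowProj, hl]
    rw [← hproj]
    exact MulAut.apply_eq_of_mem_fiberwise_inf_commuting _ ⟨Dsub_le_fiberwise_lowProj j hD, hcomm⟩ _
  · have := Subgroup.mem_iInf.mp (Subgroup.mem_iInf.mp hfix l) hl
    rwa [MulAction.mem_stabilizer_iff, MulAut.smul_def] at this

end LowerFactors

section FreeFactor

open FreeGroup

variable {n : ℕ} (j : Fin n)

lemma lift_eps_apply_of_ne (w : FreeGroup {t : Fin n // t < j}) {l : Fin n} (hl : l ≠ j) :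
    lift (fun t : {t : Fin n // t < j} => eps j t.val) w (of l) = of l := by
  have : (lift fun t : {t : Fin n // t < j} => eps j t.val).range ≤
      MulAction.stabilizer _ (of l) :=
    range_lift_le fun _ ⟨t, ht⟩ => by simp [← ht, MulAut.smul_def, hl]
  simpa [MulAut.smul_def] using this ⟨w, rfl⟩

lemma lift_eps_apply_map_val (w v : FreeGroup {t : Fin n // t < j}) :
    lift (fun t : {t : Fin n // t < j} => eps j t.val) w (map Subtype.val v) =
      map Subtype.val v := by
  have : (lift (fun t : {t : Fin n // t < j} => eps j t.val) w).toMonoidHom.comp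
      (map Subtype.val) = map Subtype.val :=
    ext_hom _ _ fun (t : {t : Fin n // t < j}) => by simpa using lift_eps_apply_of_ne j w t.prop.ne
  exact DFunLike.congr_fun this v

lemma lift_eps_apply_of_self (w : FreeGroup {t : Fin n // t < j}) :
    lift (fun t : {t : Fin n // t < j} => eps j t.val) w (of j) =
      (map Subtype.val w)⁻¹ * of j * map Subtype.val w := by
  induction w using FreeGroup.induction_on with
  | C1 => simp
  | of t => simp
  | inv_of t ih => simp [mul_assoc]
  | mul x y ihx ihy =>
    rw [_root_.map_mul, MulAut.mul_apply, ihy, _root_.map_mul, _root_.map_mul, _root_.map_inv,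
      lift_eps_apply_map_val, ihx, _root_.map_mul]
    group

lemma map_val_mem_avoiding (w : FreeGroup {t : Fin n // t < j}) :
    map Subtype.val w ∈ avoiding j := by
  rw [map_eq_lift]
  exact range_lift_le (fun _ ⟨t, ht⟩ => ht ▸ of_mem_avoiding t.prop.ne) ⟨w, rfl⟩

theorem lift_eps_injective :
    Function.Injective (lift fun t : {t : Fin n // t < j} => eps j t.val) := by
  refine (injective_iff_map_eq_one _).mpr fun w hw => map_injective Subtype.val_injective ?_
  have hconj := lift_eps_apply_of_self j w
  rw [hw, MulAut.one_apply] at hconj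
  rw [_root_.map_one]
  exact eq_one_of_inv_mul_of_mul_eq (map_val_mem_avoiding j w) hconj.symm

end FreeFactor

section FreeAbelianFactor

open FreeGroup

variable {n : ℕ}

lemma eps_zpow_apply_of_ne (i j : Fin n) (k : ℤ) {l : Fin n} (hl : l ≠ i) :
    (eps i j ^ k) (of l) = of l := by
  have : eps i j ∈ MulAction.stabilizer (MulAut (FreeGroup (Fin n))) (of l) := by
    simp [MulAut.smul_def, hl]
  simpa [MulAut.smul_def] using zpow_mem this k

lemma eps_zpow_apply_of_self {i j : Fin n} (hij : i ≠ j) (k : ℤ) :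
    (eps i j ^ k) (of i) = (of j ^ k)⁻¹ * of i * of j ^ k := by
  induction k using Int.induction_on with
  | zero => simp
  | succ k ih =>
    rw [zpow_add_one, MulAut.mul_apply, eps_apply_of, if_pos rfl, _root_.map_mul, _root_.map_mul,
      _root_.map_inv, ih, eps_zpow_apply_of_ne i j k hij.symm]
    group
  | pred k ih =>
    rw [zpow_sub_one, MulAut.mul_apply, eps_inv_apply_of, if_pos rfl, _root_.map_mul,
      _root_.map_mul, _root_.map_inv, ih, eps_zpow_apply_of_ne i j _ hij.symm]
    group

theorem eq_zero_of_prod_eps_zpow_eq_one (j : Fin n) (m : Fin n → ℤ)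
    (h : (List.ofFn fun t : Fin n => if t < j then (eps t j) ^ (m t) else 1).prod = 1)
    (s : Fin n) (hs : s < j) : m s = 0 := by
  have hprod := MulAut.list_prod_apply_of_conj (x := of s) (y := of j)
    (fun t : Fin n => if t < j then (eps t j) ^ (m t) else 1)
    (fun t => if t = s then m s else 0) (List.finRange n) ?_ ?_
  · rw [← List.ofFn_eq_map, h, MulAut.one_apply, ← Fin.sum_univ_def,
      Finset.sum_ite_eq' Finset.univ s, if_pos (Finset.mem_univ s)] at hprod
    have hone := eq_one_of_inv_mul_of_mul_eq (zpow_mem (of_mem_avoiding hs.ne') (m s)) hprod.symm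
    exact (IsMulTorsionFree.zpow_eq_one_iff_right (of_ne_one j)).mp hone
  · intro t _
    split_ifs with htj
    exacts [eps_zpow_apply_of_ne t j _ htj.ne', rfl]
  · intro t _
    split_ifs with htj hts hts
    · subst hts; exact eps_zpow_apply_of_self htj.ne _
    · simp [eps_zpow_apply_of_ne t j _ (Ne.symm hts)]
    · exact absurd (hts ▸ hs) htj
    · simp

end FreeAbelianFactor

section PureBraid

variable {n : ℕ}

lemma aConj_succ {i j : ℕ} (hij : i < j) : aConj n i (j + 1) = aConj n i j * sigmaNat n j := by
  rw [aConj, aConj, show j + 1 - 1 - i = j - 1 - i + 1 by omega, List.range_succ_eq_map]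
  simp only [List.map_cons, List.map_map, List.reverse_cons, List.prod_append, List.prod_cons,
    List.prod_nil, mul_one, Function.comp_def, Nat.add_sub_cancel, Nat.sub_zero]
  congr 4
  funext t
  congr 1
  omega

lemma a0_succ {i j : ℕ} (hij : i < j) :
    a0 n i (j + 1) = (sigmaNat n j)⁻¹ * a0 n i j * sigmaNat n j := by
  rw [a0, a0, aConj_succ hij, mul_inv_rev]
  group

lemma a0_self_succ (i : ℕ) : a0 n i (i + 1) = sigmaNat n i ^ 2 := by
  simp [a0, aConj]

lemma braidGen_inv_conj_mem_Dsub {u v : Fin n} (huv : u < v) {e : MulAut (FreeGroup (Fin n))}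
    (he : e ∈ Dsub u) : (braidGen u v)⁻¹ * e * braidGen u v ∈ Dsub v := by
  have hmap : (Dsub u).map (MulAut.conj (braidGen u v)⁻¹).toMonoidHom ≤ Dsub v := by
    rw [Dsub, MonoidHom.map_closure, Subgroup.closure_le]
    have mem : ∀ {t}, t < v → eps t v ∈ Dsub v ∧ eps v t ∈ Dsub v := fun htv =>
      ⟨Subgroup.subset_closure ⟨_, htv, Or.inr rfl⟩, Subgroup.subset_closure ⟨_, htv, Or.inl rfl⟩⟩
    rintro _ ⟨_, ⟨t, htu, rfl | rfl⟩, rfl⟩ <;>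
      simp only [MulEquiv.coe_toMonoidHom, MulAut.conj_apply, inv_inv, SetLike.mem_coe]
    · rw [braidGen_inv_conj_eps_left huv.ne htu.ne (htu.trans huv).ne]
      exact mul_mem (mul_mem (mem huv).1 (mem (htu.trans huv)).2) (inv_mem (mem huv).1)
    · rw [braidGen_inv_conj_eps_right huv.ne htu.ne (htu.trans huv).ne]
      exact (mem (htu.trans huv)).1
  simpa using hmap ⟨e, he, rfl⟩

lemma a0_mem_Dsub {i j : ℕ} (hij : i < j) (hj : j < n) : a0 n i j ∈ Dsub ⟨j, hj⟩ := by
  induction j, hij using Nat.le_induction with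
  | base =>
    have hσ : sigmaNat n i = braidGen ⟨i, by omega⟩ ⟨i + 1, hj⟩ := dif_pos hj
    rw [a0_self_succ, hσ, braidGen_sq (by simp)]
    exact mul_mem (inv_mem (Subgroup.subset_closure ⟨_, by simp [Fin.lt_def], Or.inl rfl⟩))
      (inv_mem (Subgroup.subset_closure ⟨_, by simp [Fin.lt_def], Or.inr rfl⟩))
  | succ j hij ih =>
    have hσ : sigmaNat n j = braidGen ⟨j, by omega⟩ ⟨j + 1, hj⟩ := dif_pos hj
    rw [a0_succ hij, hσ]
    exact braidGen_inv_conj_mem_Dsub (by simp [Fin.lt_def]) (ih (by omega))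

end PureBraid

theorem Cb_iterated_semidirect_general (n : ℕ) :
    -- each tail ⟨D_j : j ≥ t⟩ is a normal subgroup of Cb_n
    (∀ t : Fin n, (⨆ j : Fin n, ⨆ _ : t ≤ j, Dsub j) ≤ Cb n ∧
      ((⨆ j : Fin n, ⨆ _ : t ≤ j, Dsub j).subgroupOf (Cb n)).Normal) ∧
    -- the D_j generate Cb_n
    (⨆ j : Fin n, Dsub j) = Cb n ∧
    -- each D_j meets the product of the lower-indexed factors trivially
    (∀ j : Fin n, Dsub j ⊓ (⨆ j' : Fin n, ⨆ _ : j' < j, Dsub j') = ⊥) ∧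
    -- ε_{j,t}, t < j, freely generate a free subgroup of rank j
    (∀ j : Fin n, Function.Injective
      (FreeGroup.lift (fun t : {t : Fin n // t < j} => eps j t.val) :
        FreeGroup {t : Fin n // t < j} →* MulAut (FreeGroup (Fin n)))) ∧
    -- ε_{t,j}, t < j, generate a free abelian subgroup of rank j
    (∀ j : Fin n, ∀ t t' : Fin n, t < j → t' < j → Commute (eps t j) (eps t' j)) ∧
    (∀ j : Fin n, ∀ m : Fin n → ℤ,
      (List.ofFn fun t : Fin n => if t < j then (eps t j) ^ (m t) else 1).prod = 1 →
        ∀ t : Fin n, t < j → m t = 0) ∧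
    -- U_{j+1} ≤ D_j (0-based: ⟨a_{t,j} : t < j⟩ ≤ Dsub j)
    (∀ j : Fin n,
      Subgroup.closure {e | ∃ t : ℕ, t < (j : ℕ) ∧ e = a0 n t (j : ℕ)} ≤ Dsub j) := by
  refine ⟨fun t => ⟨iSup₂_le fun j _ => Dsub_le_Cb j, ?_⟩, iSup_Dsub_eq_Cb,
    Dsub_inf_iSup_Dsub_lt_eq_bot, lift_eps_injective,
    fun j t t' ht ht' => ?_, eq_zero_of_prod_eps_zpow_eq_one, fun j => ?_⟩
  · rw [iSup_Dsub_ge_eq_closure]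
    exact Subgroup.normal_subgroupOf_of_le_normalizer (Cb_le_normalizer_closure_tailGens t)
  · rcases eq_or_ne t t' with rfl | htt'
    exacts [Commute.refl _, eps_commute htt' ht.ne ht'.ne']
  · refine (Subgroup.closure_le _).mpr ?_
    rintro _ ⟨t, htj, rfl⟩
    exact a0_mem_Dsub htj j.isLt

/-- Theorem 3.1: for `n ≥ 2`, the group of basis-conjugating automorphisms `Cb_n`
is the iterated semidirect product `D_{n-1} ⋉ (D_{n-2} ⋉ (⋯ ⋉ (D_2 ⋉ D_1))⋯)`:
every "upper tail" `⟨D_j : j ≥ t⟩` is normal in `Cb_n`, the `D_j` together generate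
`Cb_n`, and each `D_j` meets the subgroup generated by the lower-indexed factors
trivially.  Moreover in each `D_j` the elements `ε_{j,t}` (`t < j`) freely generate
a free group of rank `j` and the elements `ε_{t,j}` (`t < j`) generate a free abelian
group of rank `j`; and the decomposition is consistent with that of the pure braid
group: `U_{j} = ⟨a_{t,j} : t < j⟩ ≤ D_j`. -/
theorem Cb_iterated_semidirect (n : ℕ) (hn : 2 ≤ n) :
    -- each tail ⟨D_j : j ≥ t⟩ is a normal subgroup of Cb_n
    (∀ t : Fin n, (⨆ j : Fin n, ⨆ _ : t ≤ j, Dsub j) ≤ Cb n ∧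
      ((⨆ j : Fin n, ⨆ _ : t ≤ j, Dsub j).subgroupOf (Cb n)).Normal) ∧
    -- the D_j generate Cb_n
    (⨆ j : Fin n, Dsub j) = Cb n ∧
    -- each D_j meets the product of the lower-indexed factors trivially
    (∀ j : Fin n, Dsub j ⊓ (⨆ j' : Fin n, ⨆ _ : j' < j, Dsub j') = ⊥) ∧
    -- ε_{j,t}, t < j, freely generate a free subgroup of rank j
    (∀ j : Fin n, Function.Injective
      (FreeGroup.lift (fun t : {t : Fin n // t < j} => eps j t.val) :
        FreeGroup {t : Fin n // t < j} →* MulAut (FreeGroup (Fin n)))) ∧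
    -- ε_{t,j}, t < j, generate a free abelian subgroup of rank j
    (∀ j : Fin n, ∀ t t' : Fin n, t < j → t' < j → Commute (eps t j) (eps t' j)) ∧
    (∀ j : Fin n, ∀ m : Fin n → ℤ,
      (List.ofFn fun t : Fin n => if t < j then (eps t j) ^ (m t) else 1).prod = 1 →
        ∀ t : Fin n, t < j → m t = 0) ∧
    -- U_{j+1} ≤ D_j (0-based: ⟨a_{t,j} : t < j⟩ ≤ Dsub j)
    (∀ j : Fin n,
      Subgroup.closure {e | ∃ t : ℕ, t < (j : ℕ) ∧ e = a0 n t (j : ℕ)} ≤ Dsub j) :=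
  Cb_iterated_semidirect_general n
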